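/- arXiv:1206.1376 — 4 statements merged into one kernel-verified Lean document; each statement's English description precedes it below -/
import Mathlib

section
/- Let r ≥ 3, t ∈ (0,1), and let w : E(K_n) → [0,1] be an edge weighting of K_n with minimum weighted degree at least δ·n, where δ ∈ (t,1]. Then every vertex v of K_n is contained in at least ((δ - t)/(1 - t))·C(n-1, r-1) subsets of size r containing v whose induced total edge weight is at least t·C(r,2). -/
open Finset

/-- Total edge weight inside a vertex set `S` (each unordered pair counted once). -/
noncomputable def cliqueWeight {α : Type*} [DecidableEq α] (w : α → α → ℝ) (S : Finset α) : ℝ :=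
  (∑ x ∈ S, ∑ y ∈ S, if x ≠ y then w x y else 0) / 2

/-- Weighted degree of a vertex of the complete graph `K_n`. -/
noncomputable def wdeg {n : ℕ} (w : Fin n → Fin n → ℝ) (v : Fin n) : ℝ :=
  ∑ u ∈ univ \ {v}, w v u

/-- A `K_r`-factor: a partition of the vertex set of `K_n` into parts of size `r`. -/
def IsFactor {n : ℕ} (r : ℕ) (P : Finset (Finset (Fin n))) : Prop :=
  (∀ S ∈ P, S.card = r) ∧
  (∀ S ∈ P, ∀ T ∈ P, S ≠ T → Disjoint S T) ∧
  P.biUnion id = univ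

/-- Number of `r`-subsets of the full vertex set containing a fixed set `T`. -/
lemma count_sup {n r : ℕ} (T : Finset (Fin n)) (hT : T.card ≤ r) :
    ((univ.powersetCard r).filter (fun S => T ⊆ S)).card = (n - T.card).choose (r - T.card) := by
  have h1 : ((univ \ T : Finset (Fin n)).powersetCard (r - T.card)).card
      = (n - T.card).choose (r - T.card) := by
    rw [card_powersetCard, card_univ_diff, Fintype.card_fin]
  rw [← h1]
  apply Finset.card_nbij' (i := fun S => S \ T) (j := fun B => B ∪ T)
  · intro S hS
    simp only [mem_coe, mem_filter, mem_powersetCard] at hS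
    obtain ⟨⟨_, hcard⟩, hTS⟩ := hS
    rw [mem_coe, mem_powersetCard]
    exact ⟨sdiff_subset_sdiff (subset_univ S) le_rfl, by rw [card_sdiff_of_subset hTS, hcard]⟩
  · intro B hB
    rw [mem_coe, mem_powersetCard] at hB
    obtain ⟨hBsub, hBcard⟩ := hB
    have hdisj : Disjoint B T := disjoint_of_subset_left hBsub (sdiff_disjoint)
    simp only [mem_coe, mem_filter, mem_powersetCard]
    refine ⟨⟨subset_univ _, ?_⟩, subset_union_right⟩
    rw [card_union_of_disjoint hdisj, hBcard]
    omega
  · intro S hS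
    simp only [mem_coe, mem_filter, mem_powersetCard] at hS
    exact sdiff_union_of_subset hS.2
  · intro B hB
    rw [mem_coe, mem_powersetCard] at hB
    exact union_sdiff_cancel_right (disjoint_of_subset_left hB.1 sdiff_disjoint)

/-- Double-counting: swap the sum over sets and the sums over pairs. -/
lemma swap_sum {n : ℕ} (A : Finset (Finset (Fin n))) (f : Fin n → Fin n → ℝ) :
    ∑ S ∈ A, ∑ x ∈ S, ∑ y ∈ S, f x y
      = ∑ x : Fin n, ∑ y : Fin n, ((A.filter (fun S => x ∈ S ∧ y ∈ S)).card : ℝ) * f x y := by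
  have step1 : ∀ S : Finset (Fin n), (∑ x ∈ S, ∑ y ∈ S, f x y)
      = ∑ x : Fin n, ∑ y : Fin n, if x ∈ S ∧ y ∈ S then f x y else 0 := by
    intro S
    have h : ∀ x : Fin n, (∑ y : Fin n, if x ∈ S ∧ y ∈ S then f x y else 0)
        = if x ∈ S then ∑ y ∈ S, f x y else 0 := by
      intro x
      by_cases hx : x ∈ S
      · simp only [hx, true_and, if_true]
        rw [sum_ite_mem, univ_inter]
      · simp [hx]
    simp_rw [h]
    rw [sum_ite_mem, univ_inter]
  simp_rw [step1]
  rw [Finset.sum_comm]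
  refine sum_congr rfl fun x _ => ?_
  rw [Finset.sum_comm]
  refine sum_congr rfl fun y _ => ?_
  rw [← sum_filter, sum_const, nsmul_eq_mul]

set_option maxHeartbeats 1000000

/-- with minimum weighted degree at least `δ·n`, every vertex lies in at
least `((δ-t)/(1-t))·C(n-1,r-1)` heavy `r`-sets (sets of weight at least `t·C(r,2)`). -/
theorem heavy_clique_count (n r : ℕ) (hr : 3 ≤ r)
    (t δ : ℝ) (ht : t ∈ Set.Ioo (0 : ℝ) 1) (hδ : δ ∈ Set.Ioc t 1)
    (w : Fin n → Fin n → ℝ) (hsym : ∀ x y, w x y = w y x)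
    (hw : ∀ x y, x ≠ y → w x y ∈ Set.Icc (0 : ℝ) 1)
    (hdeg : ∀ v, δ * n ≤ wdeg w v) (v : Fin n) :
    ((δ - t) / (1 - t)) * ((n - 1).choose (r - 1) : ℝ) ≤
      (((univ.powersetCard r).filter
          (fun S => v ∈ S ∧ t * (r.choose 2 : ℝ) ≤ cliqueWeight w S)).card : ℝ) := by
  obtain ⟨ht0, ht1⟩ := ht
  obtain ⟨hδt, hδ1⟩ := hδ
  have hδ0 : 0 < δ := lt_trans ht0 hδt
  have h1t : 0 < 1 - t := by linarith
  rcases lt_or_ge n r with hnr | hnr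
  · rw [Nat.choose_eq_zero_of_lt (by omega), Nat.cast_zero, mul_zero]
    exact Nat.cast_nonneg _
  -- main case : r ≤ n
  set A : Finset (Finset (Fin n)) := (univ.powersetCard r).filter (fun S => v ∈ S) with hAdef
  set N : ℕ := (n - 1).choose (r - 1) with hNdef
  set C2 : ℕ := (n - 2).choose (r - 2) with hC2def
  set C3 : ℕ := (n - 3).choose (r - 3) with hC3def
  have hNA : A.card = N := by
    have : A = (univ.powersetCard r).filter (fun S => ({v} : Finset (Fin n)) ⊆ S) := by
      simp [hAdef, singleton_subset_iff]
    rw [this, count_sup _ (by simpa using by omega : ({v} : Finset (Fin n)).card ≤ r)]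
    simp [hNdef]
  have hfilt : ∀ x y : Fin n, A.filter (fun S => x ∈ S ∧ y ∈ S)
      = (univ.powersetCard r).filter (fun S => ({v, x, y} : Finset (Fin n)) ⊆ S) := by
    intro x y
    rw [hAdef, filter_filter]
    apply filter_congr
    intro S _
    simp [insert_subset_iff]
  have hcount2 : ∀ x y : Fin n, x ≠ y → (v = x ∨ v = y) →
      ((A.filter (fun S => x ∈ S ∧ y ∈ S)).card) = C2 := by
    intro x y hxy hv
    rw [hfilt]
    have hcard : ({v, x, y} : Finset (Fin n)).card = 2 := by
      rcases hv with rfl | rfl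
      · rw [Finset.insert_idem, card_insert_of_notMem (by simpa using hxy), card_singleton]
      · rw [Finset.insert_eq_self.mpr (by simp), card_insert_of_notMem (by simpa using hxy),
          card_singleton]
    rw [count_sup _ (by omega), hcard]
  have hcount3 : ∀ x y : Fin n, x ≠ y → v ≠ x → v ≠ y →
      ((A.filter (fun S => x ∈ S ∧ y ∈ S)).card) = C3 := by
    intro x y hxy hvx hvy
    rw [hfilt]
    have hcard : ({v, x, y} : Finset (Fin n)).card = 3 := by
      rw [card_insert_of_notMem (by simp [hvx, hvy]),
        card_insert_of_notMem (by simpa using hxy), card_singleton]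
    rw [count_sup _ (by omega), hcard]
  -- the double-counted total
  set g : Fin n → Fin n → ℝ := fun x y => if x ≠ y then w x y else 0 with hgdef
  have hg0 : ∀ x y, 0 ≤ g x y := by
    intro x y
    by_cases h : x = y
    · simp [hgdef, h]
    · simp only [hgdef, if_pos h]
      exact (hw x y h).1
  set T : ℝ := ∑ x : Fin n, ∑ y : Fin n,
      ((A.filter (fun S => x ∈ S ∧ y ∈ S)).card : ℝ) * g x y with hTdef
  have hTswap : ∑ S ∈ A, ∑ x ∈ S, ∑ y ∈ S, g x y = T := swap_sum A g
  -- compute T row by row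
  have hrowv : ∑ y : Fin n, ((A.filter (fun S => v ∈ S ∧ y ∈ S)).card : ℝ) * g v y
      = (C2 : ℝ) * wdeg w v := by
    rw [sum_eq_sum_sdiff_singleton_add (mem_univ v)]
    have hvv : g v v = 0 := by simp [hgdef]
    rw [hvv, mul_zero, add_zero, wdeg, mul_sum]
    apply sum_congr rfl
    intro y hy
    have hyv : y ≠ v := by simpa using (mem_sdiff.mp hy).2
    rw [hcount2 v y (Ne.symm hyv) (Or.inl rfl)]
    simp [hgdef, Ne.symm hyv]
  have hrowx : ∀ x : Fin n, x ≠ v →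
      ∑ y : Fin n, ((A.filter (fun S => x ∈ S ∧ y ∈ S)).card : ℝ) * g x y
        = (C3 : ℝ) * (wdeg w x - w x v) + (C2 : ℝ) * w x v := by
    intro x hxv
    rw [sum_eq_sum_sdiff_singleton_add (mem_univ v)]
    have h1 : ((A.filter (fun S => x ∈ S ∧ v ∈ S)).card : ℝ) * g x v = (C2 : ℝ) * w x v := by
      rw [hcount2 x v hxv (Or.inr rfl)]
      simp [hgdef, hxv]
    rw [h1]
    congr 1
    have hxmem : x ∈ univ \ ({v} : Finset (Fin n)) := by simp [hxv]
    rw [sum_eq_sum_sdiff_singleton_add hxmem]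
    have hxx : g x x = 0 := by simp [hgdef]
    rw [hxx, mul_zero, add_zero]
    have hinner : ∑ y ∈ (univ \ {v}) \ {x},
        ((A.filter (fun S => x ∈ S ∧ y ∈ S)).card : ℝ) * g x y
        = (C3 : ℝ) * ∑ y ∈ (univ \ {v}) \ {x}, w x y := by
      rw [mul_sum]
      apply sum_congr rfl
      intro y hy
      simp only [mem_sdiff, mem_univ, mem_singleton, true_and] at hy
      have hne : x ≠ y := fun h => hy.2 h.symm
      rw [hcount3 x y hne (Ne.symm hxv) (fun h => hy.1 h.symm)]
      simp [hgdef, hne]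
    have hwd : wdeg w x = (∑ y ∈ (univ \ {v}) \ {x}, w x y) + w x v := by
      rw [wdeg, sum_eq_sum_sdiff_singleton_add
        (show v ∈ univ \ ({x} : Finset (Fin n)) by simp [Ne.symm hxv]), sdiff_sdiff_comm]
    rw [hinner, hwd]
    ring
  -- exact value of T
  have hTval : T = (C2 : ℝ) * wdeg w v
      + ∑ x ∈ univ \ {v}, ((C3 : ℝ) * (wdeg w x - w x v) + (C2 : ℝ) * w x v) := by
    rw [hTdef, sum_eq_sum_sdiff_singleton_add (mem_univ v), hrowv, add_comm]
    congr 1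
    apply sum_congr rfl
    intro x hx
    exact hrowx x (by simpa using (mem_sdiff.mp hx).2)
  have hsv : ∑ x ∈ univ \ {v}, w x v = wdeg w v := by
    rw [wdeg]
    exact sum_congr rfl fun x _ => hsym x v
  have hC32 : C3 ≤ C2 := by
    have h1 : n - 2 = (n - 3) + 1 := by omega
    have h2 : r - 2 = (r - 3) + 1 := by omega
    rw [hC2def, hC3def, h1, h2, Nat.choose_succ_succ]
    exact Nat.le_add_right _ _
  have hcardv : ((univ \ {v} : Finset (Fin n)).card : ℝ) = (n : ℝ) - 1 := by
    rw [card_univ_diff, card_singleton, Fintype.card_fin, Nat.cast_sub (by omega)]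
    norm_num
  -- lower bound for T
  have hTlb : δ * n * (2 * (C2 : ℝ) + ((n : ℝ) - 2) * C3) ≤ T := by
    rw [hTval]
    have hstep : ∀ x ∈ univ \ {v},
        (C3 : ℝ) * (δ * n) + ((C2 : ℝ) - C3) * w x v
          ≤ (C3 : ℝ) * (wdeg w x - w x v) + (C2 : ℝ) * w x v := by
      intro x _
      have h := hdeg x
      have h3 : (0 : ℝ) ≤ (C3 : ℝ) := Nat.cast_nonneg _
      nlinarith
    have hsum1 := sum_le_sum hstep
    have hsum2 : ∑ x ∈ univ \ {v}, ((C3 : ℝ) * (δ * n) + ((C2 : ℝ) - C3) * w x v)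
        = ((n : ℝ) - 1) * ((C3 : ℝ) * (δ * n)) + ((C2 : ℝ) - C3) * wdeg w v := by
      rw [sum_add_distrib, sum_const, ← mul_sum, hsv, nsmul_eq_mul, hcardv]
    rw [hsum2] at hsum1
    have hdv := hdeg v
    have hC32R : (C3 : ℝ) ≤ C2 := Nat.cast_le.mpr hC32
    have h2 : (0 : ℝ) ≤ (C2 : ℝ) := Nat.cast_nonneg _
    have h3 : (0 : ℝ) ≤ (C3 : ℝ) := Nat.cast_nonneg _
    have hδn : (0 : ℝ) ≤ δ * n := by positivity
    nlinarith
  -- binomial identities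
  have i1 : (n - 1) * C2 = N * (r - 1) := by
    have e1 : (n - 2) + 1 = n - 1 := by omega
    have e2 : (r - 2) + 1 = r - 1 := by omega
    have h := Nat.add_one_mul_choose_eq (n - 2) (r - 2)
    simpa [Nat.succ_eq_add_one, e1, e2, hNdef, hC2def] using h
  have i2 : (n - 2) * C3 = C2 * (r - 2) := by
    have e1 : (n - 3) + 1 = n - 2 := by omega
    have e2 : (r - 3) + 1 = r - 2 := by omega
    have h := Nat.add_one_mul_choose_eq (n - 3) (r - 3)
    simpa [Nat.succ_eq_add_one, e1, e2, hC2def, hC3def] using h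
  have i3 : 2 * r.choose 2 = r * (r - 1) := by
    have e1 : (r - 1) + 1 = r := by omega
    have h := Nat.add_one_mul_choose_eq (r - 1) 1
    simp only [Nat.succ_eq_add_one, e1, Nat.choose_one_right] at h
    norm_num at h
    omega
  have hkey : 2 * N * r.choose 2 ≤ n * (2 * C2 + (n - 2) * C3) := by
    have hrw : 2 * C2 + (n - 2) * C3 = r * C2 := by
      calc 2 * C2 + (n - 2) * C3 = 2 * C2 + C2 * (r - 2) := by rw [i2]
        _ = C2 * (2 + (r - 2)) := by ring
        _ = C2 * r := by congr 1; omega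
        _ = r * C2 := by ring
    calc 2 * N * r.choose 2 = N * (2 * r.choose 2) := by ring
      _ = N * (r * (r - 1)) := by rw [i3]
      _ = r * (N * (r - 1)) := by ring
      _ = r * ((n - 1) * C2) := by rw [i1]
      _ ≤ r * (n * C2) := Nat.mul_le_mul le_rfl (Nat.mul_le_mul (Nat.sub_le n 1) le_rfl)
      _ = n * (r * C2) := by ring
      _ = n * (2 * C2 + (n - 2) * C3) := by rw [hrw]
  have h2n : ((n - 2 : ℕ) : ℝ) = (n : ℝ) - 2 := Nat.cast_sub (by omega)
  have hkeyR : 2 * (N : ℝ) * (r.choose 2 : ℝ)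
      ≤ (n : ℝ) * (2 * (C2 : ℝ) + ((n : ℝ) - 2) * C3) := by
    rw [← h2n]
    exact_mod_cast hkey
  -- sum of clique weights over A
  have hsumA : ∑ S ∈ A, cliqueWeight w S = T / 2 := by
    rw [← hTswap, sum_div]
    rfl
  have hK : (0 : ℝ) < (r.choose 2 : ℝ) := by
    exact_mod_cast Nat.choose_pos (by omega)
  have hlb : δ * N * (r.choose 2 : ℝ) ≤ ∑ S ∈ A, cliqueWeight w S := by
    rw [hsumA]
    nlinarith
  -- upper bound for each clique weight
  have hWub : ∀ S ∈ A, cliqueWeight w S ≤ (r.choose 2 : ℝ) := by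
    intro S hS
    have hSr : S.card = r := (mem_powersetCard.mp (mem_filter.mp hS).1).2
    have hinner : ∀ x ∈ S, ∑ y ∈ S, g x y ≤ (r : ℝ) - 1 := by
      intro x hx
      calc ∑ y ∈ S, g x y ≤ ∑ y ∈ S, (if x ≠ y then (1 : ℝ) else 0) := by
            apply sum_le_sum
            intro y _
            by_cases h : x = y
            · simp [hgdef, h]
            · simp only [hgdef, if_pos h]
              exact (hw x y h).2
        _ = ((S.filter (fun y => x ≠ y)).card : ℝ) := sum_boole _ _
        _ = ((S.erase x).card : ℝ) := by rw [filter_ne]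
        _ = (r : ℝ) - 1 := by
            rw [card_erase_of_mem hx, hSr, Nat.cast_sub (by omega)]
            norm_num
    have := sum_le_card_nsmul S (fun x => ∑ y ∈ S, g x y) ((r : ℝ) - 1) hinner
    rw [hSr, nsmul_eq_mul] at this
    have hKval : (r.choose 2 : ℝ) = (r : ℝ) * ((r : ℝ) - 1) / 2 := by
      rw [Nat.cast_choose_two]
    rw [cliqueWeight, hKval]
    have : (∑ x ∈ S, ∑ y ∈ S, g x y) ≤ (r : ℝ) * ((r : ℝ) - 1) := this
    have heq : (∑ x ∈ S, ∑ y ∈ S, if x ≠ y then w x y else 0) = ∑ x ∈ S, ∑ y ∈ S, g x y := rfl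
    rw [heq]
    linarith
  -- split into heavy and light
  set p : Finset (Fin n) → Prop := fun S => t * (r.choose 2 : ℝ) ≤ cliqueWeight w S with hpdef
  have hsplit : ∑ S ∈ A.filter p, cliqueWeight w S
      + ∑ S ∈ A.filter (fun S => ¬ p S), cliqueWeight w S = ∑ S ∈ A, cliqueWeight w S :=
    sum_filter_add_sum_filter_not A p _
  have hcards : (A.filter p).card + (A.filter (fun S => ¬ p S)).card = N := by
    rw [card_filter_add_card_filter_not, hNA]
  set m : ℕ := (A.filter p).card with hmdef
  set l : ℕ := (A.filter (fun S => ¬ p S)).card with hldef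
  have hub1 : ∑ S ∈ A.filter p, cliqueWeight w S ≤ (m : ℝ) * (r.choose 2 : ℝ) := by
    have := sum_le_card_nsmul (A.filter p) (cliqueWeight w) ((r.choose 2 : ℝ))
      (fun S hS => hWub S (filter_subset _ _ hS))
    rwa [nsmul_eq_mul] at this
  have hub2 : ∑ S ∈ A.filter (fun S => ¬ p S), cliqueWeight w S
      ≤ (l : ℝ) * (t * (r.choose 2 : ℝ)) := by
    have := sum_le_card_nsmul (A.filter (fun S => ¬ p S)) (cliqueWeight w)
      (t * (r.choose 2 : ℝ)) (fun S hS => le_of_lt (lt_of_not_ge (mem_filter.mp hS).2))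
    rwa [nsmul_eq_mul] at this
  -- final algebra
  have hgoalcard : ((univ.powersetCard r).filter
      (fun S => v ∈ S ∧ t * (r.choose 2 : ℝ) ≤ cliqueWeight w S)).card = m := by
    rw [hmdef, hAdef, filter_filter]
  rw [hgoalcard]
  have hml : (m : ℝ) + l = N := by exact_mod_cast hcards
  have hineq : δ * N * (r.choose 2 : ℝ)
      ≤ (m : ℝ) * (r.choose 2 : ℝ) + (l : ℝ) * (t * (r.choose 2 : ℝ)) := by
    calc δ * N * (r.choose 2 : ℝ) ≤ ∑ S ∈ A, cliqueWeight w S := hlb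
      _ = _ + _ := hsplit.symm
      _ ≤ _ := add_le_add hub1 hub2
  have hdiv : δ * N ≤ (m : ℝ) + (l : ℝ) * t := by
    have h' : (δ * N) * (r.choose 2 : ℝ) ≤ ((m : ℝ) + (l : ℝ) * t) * (r.choose 2 : ℝ) := by
      nlinarith [hineq]
    exact le_of_mul_le_mul_right h' hK
  rw [div_mul_eq_mul_div, div_le_iff₀ h1t]
  nlinarith [hdiv, hml]
end

section
/- Let p, q > 1 and n be divisible by pq, and let w be an edge weighting of K_n. Suppose 𝒦 is a K_p-factor of K_n in which every part has weight at least t_p·C(p,2). Define a weighting w_𝒦 on K_{n/p} whose vertices correspond to the parts of 𝒦, where the weight of an edge between two parts is the average of the p² weights of edges of K_n between the corresponding parts. Then the minimum weighted degree of w_𝒦 is at least (δ_w(K_n) - (p-1))/p, where δ_w(K_n) is the minimum weighted degree of w. -/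
open Finset

/-- The part (fiber) of a `K_p`-factor, given as a function assigning each vertex its part. -/
def fiber {N m : ℕ} (f : Fin N → Fin m) (a : Fin m) : Finset (Fin N) :=
  univ.filter (fun x => f x = a)

/-- the quotient weighting of a heavy `K_p`-factor (averaged weights between
parts) has minimum weighted degree at least `(δ_w(K_n) - (p-1))/p`. -/
theorem quotient_min_degree (p q m : ℕ) (hp : 1 < p) (hq : 1 < q) (hqm : q ∣ m)
    (t_p δ : ℝ)
    (w : Fin (p * m) → Fin (p * m) → ℝ) (hsym : ∀ x y, w x y = w y x)
    (hw : ∀ x y, x ≠ y → w x y ∈ Set.Icc (0 : ℝ) 1)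
    (f : Fin (p * m) → Fin m) (hf : ∀ a, (fiber f a).card = p)
    (hheavy : ∀ a, t_p * (p.choose 2 : ℝ) ≤ cliqueWeight w (fiber f a))
    (hdeg : ∀ v, δ ≤ wdeg w v) :
    ∀ a : Fin m,
      (δ - ((p : ℝ) - 1)) / p ≤
        wdeg (fun a b => (∑ x ∈ fiber f a, ∑ y ∈ fiber f b, w x y) / (p ^ 2 : ℝ)) a := by
  intro a
  have hp0 : (0:ℝ) < p := by exact_mod_cast Nat.zero_lt_of_lt hp
  have key : ∀ x ∈ fiber f a, δ - ((p:ℝ)-1) ≤ ∑ b ∈ univ \ {a}, ∑ y ∈ fiber f b, w x y := by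
    intro x hx
    have h1 : ∑ b ∈ univ \ {a}, ∑ y ∈ fiber f b, w x y
        = (∑ y, w x y) - ∑ y ∈ fiber f a, w x y := by
      rw [Finset.sum_sdiff_eq_sub (Finset.subset_univ _), Finset.sum_singleton]
      congr 1
      exact Finset.sum_fiberwise univ f (fun y => w x y)
    have h2 : ∑ y, w x y = wdeg w x + w x x := by
      unfold wdeg
      rw [← Finset.sum_sdiff (Finset.subset_univ {x}), Finset.sum_singleton]
    have h3 : ∑ y ∈ fiber f a, w x y = (∑ y ∈ fiber f a \ {x}, w x y) + w x x := by
      rw [← Finset.sum_sdiff (by simpa using hx : ({x} : Finset _) ⊆ fiber f a),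
        Finset.sum_singleton]
    have hcard : (fiber f a \ {x}).card = p - 1 := by
      rw [Finset.card_sdiff_of_subset (by simpa using hx), hf, Finset.card_singleton]
    have h4 : ∑ y ∈ fiber f a \ {x}, w x y ≤ (p:ℝ) - 1 := by
      calc ∑ y ∈ fiber f a \ {x}, w x y ≤ ∑ y ∈ fiber f a \ {x}, 1 := by
            apply Finset.sum_le_sum
            intro y hy
            exact (hw x y (by simp at hy; exact fun h => hy.2 h.symm)).2
        _ = ((p - 1 : ℕ) : ℝ) := by rw [Finset.sum_const, hcard]; simp
        _ = (p:ℝ) - 1 := by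
            have : (1:ℕ) ≤ p := hp.le
            push_cast [this]; ring
    have := hdeg x
    rw [h1, h2, h3]
    linarith
  have hswap : wdeg (fun a b => (∑ x ∈ fiber f a, ∑ y ∈ fiber f b, w x y) / (p ^ 2 : ℝ)) a
      = (∑ x ∈ fiber f a, ∑ b ∈ univ \ {a}, ∑ y ∈ fiber f b, w x y) / (p^2 : ℝ) := by
    unfold wdeg
    rw [← Finset.sum_div]
    congr 1
    exact Finset.sum_comm
  rw [hswap]
  have hsum : (p:ℝ) * (δ - ((p:ℝ)-1)) ≤ ∑ x ∈ fiber f a, ∑ b ∈ univ \ {a}, ∑ y ∈ fiber f b, w x y := by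
    calc (p:ℝ) * (δ - ((p:ℝ)-1)) = ∑ _x ∈ fiber f a, (δ - ((p:ℝ)-1)) := by
          rw [Finset.sum_const, hf]; ring
      _ ≤ _ := Finset.sum_le_sum key
  rw [div_le_div_iff₀ hp0 (by positivity)]
  calc (δ - ((p:ℝ)-1)) * p^2 = ((p:ℝ) * (δ - ((p:ℝ)-1))) * p := by ring
    _ ≤ _ := by
        apply mul_le_mul_of_nonneg_right hsum hp0.le
end

section
/- Let t ∈ (0,1]. Then δ(2,t) = (1+t)/2, where δ(2,t) = limsup_{n→∞} δ(2,t,n)/n and δ(2,t,n) is the supremum of minimum weighted degrees over edge weightings of K_n (n even, weights in [0,1]) under which every perfect matching contains an edge of weight strictly less than t. -/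
open Finset

lemma cliqueWeight_pair {α : Type*} [DecidableEq α] (w : α → α → ℝ)
    (hsym : ∀ x y, w x y = w y x) {x y : α} (hxy : x ≠ y) :
    cliqueWeight w {x, y} = w x y := by
  have : cliqueWeight w {x,y} = (0 + w x y + (w y x + 0))/2 := by
    rw [cliqueWeight, Finset.sum_pair hxy, Finset.sum_pair hxy, Finset.sum_pair hxy]
    congr 2 <;> simp [hxy, hxy.symm]
  rw [this, hsym y x]; ring

lemma dirac_matching {k : ℕ} (hk : 1 ≤ k) (Adj : Fin (2*k) → Fin (2*k) → Prop)
    [DecidableRel Adj] (hsym : ∀ x y, Adj x y → Adj y x) (hirr : ∀ x, ¬ Adj x x)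
    (hdeg : ∀ v, k ≤ (univ.filter (Adj v)).card) :
    ∃ P : Finset (Finset (Fin (2*k))), IsFactor 2 P ∧
      ∀ S ∈ P, ∀ x ∈ S, ∀ y ∈ S, x ≠ y → Adj x y := by
  classical
  let good : Finset (Finset (Fin (2*k))) → Prop := fun M =>
    (∀ S ∈ M, S.card = 2 ∧ ∀ x ∈ S, ∀ y ∈ S, x ≠ y → Adj x y) ∧
    (∀ S ∈ M, ∀ T ∈ M, S ≠ T → Disjoint S T)
  obtain ⟨M, hMgood, hMmax⟩ : ∃ M, good M ∧ ∀ M', good M' → M'.card ≤ M.card := by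
    obtain ⟨M, hM, hmax⟩ := Finset.exists_max_image (univ.filter good) Finset.card
      ⟨∅, by simp [good]⟩
    exact ⟨M, (mem_filter.1 hM).2, fun M' h' => hmax M' (mem_filter.2 ⟨mem_univ _, h'⟩)⟩
  have hcov : (M.biUnion id).card = 2 * M.card := by
    have h1 := card_biUnion (s := M) (t := id) hMgood.2
    have h2 : ∀ S ∈ M, (id S : Finset (Fin (2*k))).card = 2 := fun S hS => (hMgood.1 S hS).1
    rw [h1, Finset.sum_congr rfl h2, Finset.sum_const, smul_eq_mul, mul_comm]
  have haug : ∀ a b : Fin (2*k), Adj a b → a ∉ M.biUnion id → b ∉ M.biUnion id → False := by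
    intro a b hab ha hb
    have hane : a ≠ b := fun h => hirr a (h ▸ hab)
    have habM : ({a, b} : Finset (Fin (2*k))) ∉ M := fun h =>
      ha (mem_biUnion.2 ⟨_, h, by simp⟩)
    have : good (insert {a, b} M) := by
      constructor
      · intro S hS
        rcases mem_insert.1 hS with rfl | hS
        · refine ⟨card_pair hane, ?_⟩
          intro x hx y hy hxy
          simp only [mem_insert, mem_singleton] at hx hy
          rcases hx with rfl | rfl <;> rcases hy with rfl | rfl
          · exact absurd rfl hxy
          · exact hab
          · exact hsym _ _ hab
          · exact absurd rfl hxy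
        · exact hMgood.1 S hS
      · intro S hS T hT hST
        have key : ∀ U ∈ M, Disjoint ({a,b} : Finset (Fin (2*k))) U := by
          intro U hU
          rw [Finset.disjoint_left]
          intro x hx hxU
          have : x ∈ M.biUnion id := mem_biUnion.2 ⟨U, hU, hxU⟩
          rcases mem_insert.1 hx with rfl | hx
          · exact ha this
          · exact hb ((mem_singleton.1 hx) ▸ this)
        rcases mem_insert.1 hS with rfl | hS <;> rcases mem_insert.1 hT with rfl | hT
        · exact absurd rfl hST
        · exact key T hT
        · exact (key S hS).symm
        · exact hMgood.2 S hS T hT hST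
    have := hMmax _ this
    rw [card_insert_of_notMem habM] at this
    omega
  have hcard : k ≤ M.card := by
    by_contra hlt
    push_neg at hlt
    -- two uncovered vertices
    obtain ⟨u, hu, v, hv, huv⟩ : ∃ u ∈ univ \ M.biUnion id, ∃ v ∈ univ \ M.biUnion id, u ≠ v := by
      apply Finset.one_lt_card.1
      have : (univ \ M.biUnion id).card = 2*k - (M.biUnion id).card :=
        card_sdiff_of_subset (subset_univ _) |>.trans (by simp)
      omega
    rw [mem_sdiff] at hu hv
    have hu : u ∉ M.biUnion id := hu.2
    have hv : v ∉ M.biUnion id := hv.2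
    have hNuC : ∀ z, Adj u z → z ∈ M.biUnion id := fun z hz =>
      by_contra fun h => haug u z hz hu h
    have hNvC : ∀ z, Adj v z → z ∈ M.biUnion id := fun z hz =>
      by_contra fun h => haug v z hz hv h
    -- no augmenting swap
    have hswap : ∀ e ∈ M, ∀ x y : Fin (2*k), x ≠ y → e = {x,y} → Adj u x → Adj v y → False := by
      intro e he x y hxy hexy hux hvy
      have hxC : x ∈ M.biUnion id := mem_biUnion.2 ⟨e, he, by rw [hexy]; simp⟩
      have hyC : y ∈ M.biUnion id := mem_biUnion.2 ⟨e, he, by rw [hexy]; simp⟩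
      have hux' : u ≠ x := fun h => hu (h ▸ hxC)
      have huy' : u ≠ y := fun h => hu (h ▸ hyC)
      have hvx' : v ≠ x := fun h => hv (h ▸ hxC)
      have hvy' : v ≠ y := fun h => hv (h ▸ hyC)
      set M' := insert {u,x} (insert {v,y} (M.erase e)) with hM'
      have hvyE : ({v,y} : Finset (Fin (2*k))) ∉ M.erase e := fun h =>
        hv (mem_biUnion.2 ⟨_, mem_of_mem_erase h, by simp⟩)
      have huxI : ({u,x} : Finset (Fin (2*k))) ∉ insert {v,y} (M.erase e) := by
        intro h
        rcases mem_insert.1 h with h | h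
        · have : u ∈ ({v,y} : Finset (Fin (2*k))) := h ▸ (by simp)
          simp only [mem_insert, mem_singleton] at this
          rcases this with h' | h' <;> [exact huv h'; exact huy' h']
        · exact hu (mem_biUnion.2 ⟨_, mem_of_mem_erase h, by simp⟩)
      have hmemdisj : ∀ S ∈ M.erase e, Disjoint ({u,x} : Finset (Fin (2*k))) S ∧
          Disjoint ({v,y} : Finset (Fin (2*k))) S := by
        intro S hS
        obtain ⟨hSne, hSM⟩ := mem_erase.1 hS
        have hdisj : Disjoint S e := hMgood.2 S hSM e he hSne
        have hxS : x ∉ S := fun h => (Finset.disjoint_left.1 hdisj h) (by rw [hexy]; simp)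
        have hyS : y ∉ S := fun h => (Finset.disjoint_left.1 hdisj h) (by rw [hexy]; simp)
        have huS : u ∉ S := fun h => hu (mem_biUnion.2 ⟨S, hSM, h⟩)
        have hvS : v ∉ S := fun h => hv (mem_biUnion.2 ⟨S, hSM, h⟩)
        constructor
        · rw [Finset.disjoint_left]
          intro a ha haS
          simp only [mem_insert, mem_singleton] at ha
          rcases ha with rfl | rfl <;> [exact huS haS; exact hxS haS]
        · rw [Finset.disjoint_left]
          intro a ha haS
          simp only [mem_insert, mem_singleton] at ha
          rcases ha with rfl | rfl <;> [exact hvS haS; exact hyS haS]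
      have hgood' : good M' := by
        constructor
        · intro S hS
          rcases mem_insert.1 hS with rfl | hS
          · refine ⟨card_pair hux', ?_⟩
            intro a ha b hb hab
            simp only [mem_insert, mem_singleton] at ha hb
            rcases ha with rfl | rfl <;> rcases hb with rfl | rfl
            · exact absurd rfl hab
            · exact hux
            · exact hsym _ _ hux
            · exact absurd rfl hab
          rcases mem_insert.1 hS with rfl | hS
          · refine ⟨card_pair hvy', ?_⟩
            intro a ha b hb hab
            simp only [mem_insert, mem_singleton] at ha hb
            rcases ha with rfl | rfl <;> rcases hb with rfl | rfl
            · exact absurd rfl hab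
            · exact hvy
            · exact hsym _ _ hvy
            · exact absurd rfl hab
          · exact hMgood.1 S (mem_of_mem_erase hS)
        · have hd12 : Disjoint ({u,x} : Finset (Fin (2*k))) ({v,y} : Finset (Fin (2*k))) := by
            rw [Finset.disjoint_left]
            intro a ha ha'
            simp only [mem_insert, mem_singleton] at ha ha'
            rcases ha with rfl | rfl <;> rcases ha' with rfl | rfl
            · exact huv rfl
            · exact huy' rfl
            · exact hvx' rfl
            · exact hxy rfl
          intro S hS T hT hST
          rcases mem_insert.1 hS with rfl | hS <;> rcases mem_insert.1 hT with rfl | hT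
          · exact absurd rfl hST
          · rcases mem_insert.1 hT with rfl | hT
            · exact hd12
            · exact (hmemdisj T hT).1
          · rcases mem_insert.1 hS with rfl | hS
            · exact hd12.symm
            · exact ((hmemdisj S hS).1).symm
          · rcases mem_insert.1 hS with rfl | hS <;> rcases mem_insert.1 hT with rfl | hT
            · exact absurd rfl hST
            · exact (hmemdisj T hT).2
            · exact ((hmemdisj S hS).2).symm
            · exact hMgood.2 S (mem_of_mem_erase hS) T (mem_of_mem_erase hT) hST
      have hcard' : M'.card = M.card + 1 := by
        rw [hM', card_insert_of_notMem huxI, card_insert_of_notMem hvyE,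
          card_erase_of_mem he]
        have : 1 ≤ M.card := card_pos.2 ⟨e, he⟩
        omega
      have := hMmax _ hgood'
      omega
    -- counting
    have hcount : ∀ e ∈ M,
        ((univ.filter (Adj u)) ∩ e).card + ((univ.filter (Adj v)) ∩ e).card ≤ 2 := by
      intro e he
      obtain ⟨x, y, hxy, hexy⟩ := Finset.card_eq_two.1 (hMgood.1 e he).1
      have h1 : ¬ (Adj u x ∧ Adj v y) := fun ⟨h, h'⟩ => hswap e he x y hxy hexy h h'
      have h2 : ¬ (Adj u y ∧ Adj v x) := fun ⟨h, h'⟩ =>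
        hswap e he y x hxy.symm (by rw [hexy]; exact Finset.pair_comm x y) h h'
      have cu : ((univ.filter (Adj u)) ∩ e).card
          = (if Adj u x then 1 else 0) + (if Adj u y then 1 else 0) := by
        have : (univ.filter (Adj u)) ∩ e = e.filter (Adj u) := by
          ext z; simp [and_comm]
        rw [this, Finset.card_filter, hexy, Finset.sum_pair hxy]
      have cv : ((univ.filter (Adj v)) ∩ e).card
          = (if Adj v x then 1 else 0) + (if Adj v y then 1 else 0) := by
        have : (univ.filter (Adj v)) ∩ e = e.filter (Adj v) := by
          ext z; simp [and_comm]
        rw [this, Finset.card_filter, hexy, Finset.sum_pair hxy]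
      rw [cu, cv]
      split_ifs <;> first | omega | (exfalso; tauto)
    have hNu : (univ.filter (Adj u)) = M.biUnion (fun e => (univ.filter (Adj u)) ∩ e) := by
      ext z
      simp only [mem_biUnion, mem_inter]
      constructor
      · intro hz
        obtain ⟨e, he, hze⟩ := mem_biUnion.1 (hNuC z (mem_filter.1 hz).2)
        exact ⟨e, he, hz, hze⟩
      · rintro ⟨e, _, hz, _⟩; exact hz
    have hNv : (univ.filter (Adj v)) = M.biUnion (fun e => (univ.filter (Adj v)) ∩ e) := by
      ext z
      simp only [mem_biUnion, mem_inter]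
      constructor
      · intro hz
        obtain ⟨e, he, hze⟩ := mem_biUnion.1 (hNvC z (mem_filter.1 hz).2)
        exact ⟨e, he, hz, hze⟩
      · rintro ⟨e, _, hz, _⟩; exact hz
    have hdisjNu : ∀ e ∈ M, ∀ f ∈ M, e ≠ f →
        Disjoint ((univ.filter (Adj u)) ∩ e) ((univ.filter (Adj u)) ∩ f) :=
      fun e he f hf hef => (hMgood.2 e he f hf hef).mono inter_subset_right inter_subset_right
    have hdisjNv : ∀ e ∈ M, ∀ f ∈ M, e ≠ f →
        Disjoint ((univ.filter (Adj v)) ∩ e) ((univ.filter (Adj v)) ∩ f) :=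
      fun e he f hf hef => (hMgood.2 e he f hf hef).mono inter_subset_right inter_subset_right
    have hNucard : (univ.filter (Adj u)).card = ∑ e ∈ M, ((univ.filter (Adj u)) ∩ e).card := by
      conv_lhs => rw [hNu]
      exact card_biUnion hdisjNu
    have hNvcard : (univ.filter (Adj v)).card = ∑ e ∈ M, ((univ.filter (Adj v)) ∩ e).card := by
      conv_lhs => rw [hNv]
      exact card_biUnion hdisjNv
    have hsum : (univ.filter (Adj u)).card + (univ.filter (Adj v)).card ≤ 2 * M.card := by
      rw [hNucard, hNvcard, ← Finset.sum_add_distrib]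
      calc ∑ e ∈ M, (((univ.filter (Adj u)) ∩ e).card + ((univ.filter (Adj v)) ∩ e).card)
          ≤ ∑ _e ∈ M, 2 := Finset.sum_le_sum hcount
        _ = 2 * M.card := by rw [Finset.sum_const, smul_eq_mul, mul_comm]
    have := hdeg u
    have := hdeg v
    omega
  have hcard' : M.card = k := by
    have : (M.biUnion id).card ≤ 2*k := by
      simpa using card_le_card (subset_univ (M.biUnion id))
    omega
  have huniv : M.biUnion id = univ := by
    apply eq_univ_of_card
    rw [hcov, hcard']
    simp
  exact ⟨M, ⟨fun S hS => (hMgood.1 S hS).1, hMgood.2, huniv⟩,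
    fun S hS x hx y hy hxy => (hMgood.1 S hS).2 x hx y hy hxy⟩

/-- `deltaN r t n` : the supremum of minimum weighted degrees over `[0,1]`-edge-weightings
of `K_n` in which every `K_r`-factor has a part of weight strictly less than `t·C(r,2)`. -/
noncomputable def deltaN (r : ℕ) (t : ℝ) (n : ℕ) : ℝ :=
  sSup { d : ℝ | ∃ w : Fin n → Fin n → ℝ,
    (∀ x y, w x y = w y x) ∧
    (∀ x y, x ≠ y → w x y ∈ Set.Icc (0 : ℝ) 1) ∧
    (∀ P : Finset (Finset (Fin n)), IsFactor r P →
      ∃ S ∈ P, cliqueWeight w S < t * (r.choose 2 : ℝ)) ∧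
    d = sInf (Set.range (wdeg w)) }

/-- `delta r t = limsup_{n → ∞, r ∣ n} deltaN r t n / n`. -/
noncomputable def delta (r : ℕ) (t : ℝ) : ℝ :=
  Filter.limsup (fun k : ℕ => deltaN r t (r * k) / ((r * k : ℕ) : ℝ)) Filter.atTop

lemma wdeg_bddBelow {n : ℕ} (w : Fin n → Fin n → ℝ)
    (hrange : ∀ x y, x ≠ y → w x y ∈ Set.Icc (0 : ℝ) 1) :
    BddBelow (Set.range (wdeg w)) := by
  refine ⟨0, ?_⟩
  rintro _ ⟨v, rfl⟩
  apply Finset.sum_nonneg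
  intro u hu
  have : u ≠ v := by simpa using (mem_sdiff.1 hu).2
  exact (hrange v u this.symm).1

lemma deltaN_le (t : ℝ) (ht0 : 0 < t) (ht1 : t ≤ 1) {k : ℕ} (hk : 1 ≤ k) :
    deltaN 2 t (2*k) ≤ ((k : ℝ) - 1) + k * t := by
  classical
  have hk1 : (1:ℝ) ≤ (k:ℝ) := by exact_mod_cast hk
  apply Real.sSup_le
  · rintro d ⟨w, hsymm, hrange, hfact, rfl⟩
    set Adj : Fin (2*k) → Fin (2*k) → Prop := fun x y => x ≠ y ∧ t ≤ w x y with hAdj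
    by_cases hdeg : ∀ v, k ≤ (univ.filter (Adj v)).card
    · exfalso
      obtain ⟨P, hP, hPadj⟩ := dirac_matching hk Adj
        (fun x y h => ⟨h.1.symm, (hsymm x y) ▸ h.2⟩)
        (fun x h => h.1 rfl) hdeg
      obtain ⟨S, hS, hlt⟩ := hfact P hP
      obtain ⟨x, y, hxy, rfl⟩ := Finset.card_eq_two.1 (hP.1 S hS)
      rw [cliqueWeight_pair w hsymm hxy] at hlt
      have hadj : Adj x y := hPadj _ hS x (by simp) y (by simp) hxy
      have hch : ((Nat.choose 2 2 : ℕ) : ℝ) = 1 := by norm_num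
      rw [hch, mul_one] at hlt
      exact absurd hadj.2 (not_le.2 hlt)
    · push_neg at hdeg
      obtain ⟨v, hv⟩ := hdeg
      have hle : sInf (Set.range (wdeg w)) ≤ wdeg w v :=
        csInf_le (wdeg_bddBelow w hrange) (Set.mem_range_self v)
      refine hle.trans ?_
      set s : Finset (Fin (2*k)) := univ \ {v} with hs
      have hscard : s.card = 2*k - 1 := by
        rw [hs, card_sdiff_of_subset (by simp)]
        simp
      have hfilter_eq : univ.filter (Adj v) = s.filter (fun u => t ≤ w v u) := by
        ext u
        simp only [hAdj, mem_filter, mem_univ, true_and, hs, mem_sdiff, mem_singleton, ne_eq]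
        exact and_congr_left' (not_congr eq_comm)
      set a := (s.filter (fun u => t ≤ w v u)).card with ha
      have hak : a ≤ k - 1 := by
        have := hfilter_eq ▸ hv
        omega
      have has : a ≤ 2*k - 1 := hscard ▸ card_filter_le s _
      have hsplit : wdeg w v = (∑ u ∈ s.filter (fun u => t ≤ w v u), w v u)
          + ∑ u ∈ s.filter (fun u => ¬ t ≤ w v u), w v u := by
        rw [wdeg, ← Finset.sum_filter_add_sum_filter_not s (fun u => t ≤ w v u)]
      have hne : ∀ u ∈ s, v ≠ u := by
        intro u hu
        have : u ≠ v := by simpa [hs] using (mem_sdiff.1 hu).2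
        exact this.symm
      have h1 : (∑ u ∈ s.filter (fun u => t ≤ w v u), w v u) ≤ a * 1 := by
        rw [ha]
        have := Finset.sum_le_card_nsmul (s.filter (fun u => t ≤ w v u)) (w v) 1
          (fun u hu => (hrange v u (hne u (mem_filter.1 hu).1)).2)
        simpa using this
      have h2 : (∑ u ∈ s.filter (fun u => ¬ t ≤ w v u), w v u)
          ≤ ((2*k - 1 - a : ℕ) : ℝ) * t := by
        have hcard2 : (s.filter (fun u => ¬ t ≤ w v u)).card = 2*k - 1 - a := by
          rw [Finset.filter_not, card_sdiff_of_subset (filter_subset _ _), hscard, ha]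
        have := Finset.sum_le_card_nsmul (s.filter (fun u => ¬ t ≤ w v u)) (w v) t
          (fun u hu => le_of_lt (not_le.1 (mem_filter.1 hu).2))
        rw [hcard2] at this
        simpa using this
      have hacast : ((a:ℝ)) ≤ (k:ℝ) - 1 := by
        have : (a:ℝ) ≤ ((k-1 : ℕ) : ℝ) := by exact_mod_cast hak
        rw [Nat.cast_sub hk] at this
        simpa using this
      have hsub : ((2*k - 1 - a : ℕ) : ℝ) = 2*(k:ℝ) - 1 - a := by
        push_cast [Nat.cast_sub has, Nat.cast_sub (by omega : 1 ≤ 2*k)]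
        ring
      rw [hsplit]
      rw [hsub] at h2
      nlinarith [h1, h2]
  · nlinarith [hk1, ht0.le]

lemma card_filter_fin_lt {n m : ℕ} (h : m ≤ n) :
    (univ.filter (fun u : Fin n => (u:ℕ) < m)).card = m := by
  have key : (univ.filter (fun u : Fin n => (u:ℕ) < m)).card = (Finset.range m).card := by
    apply Finset.card_bij (fun (u : Fin n) _ => (u : ℕ))
    · intro u hu
      simpa using (mem_filter.1 hu).2
    · intro u _ u' _ huv
      exact Fin.val_injective huv
    · intro b hb
      refine ⟨⟨b, lt_of_lt_of_le (Finset.mem_range.1 hb) h⟩, ?_, rfl⟩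
      simpa using Finset.mem_range.1 hb
  simpa using key

lemma deltaN_bddAbove (t : ℝ) {n : ℕ} (hn : 0 < n) :
    ∀ d ∈ { d : ℝ | ∃ w : Fin n → Fin n → ℝ,
    (∀ x y, w x y = w y x) ∧
    (∀ x y, x ≠ y → w x y ∈ Set.Icc (0 : ℝ) 1) ∧
    (∀ P : Finset (Finset (Fin n)), IsFactor 2 P →
      ∃ S ∈ P, cliqueWeight w S < t * ((2:ℕ).choose 2 : ℝ)) ∧
    d = sInf (Set.range (wdeg w)) }, d ≤ n := by
  rintro d ⟨w, hsymm, hrange, hfact, rfl⟩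
  have v0 : Fin n := ⟨0, hn⟩
  have hle : sInf (Set.range (wdeg w)) ≤ wdeg w v0 :=
    csInf_le (wdeg_bddBelow w hrange) (Set.mem_range_self v0)
  refine hle.trans ?_
  have : wdeg w v0 ≤ ((univ \ {v0} : Finset (Fin n)).card : ℝ) * 1 := by
    have := Finset.sum_le_card_nsmul (univ \ {v0}) (w v0) 1
      (fun u hu => (hrange v0 u (fun h => by simp [← h] at hu)).2)
    simpa [wdeg] using this
  refine this.trans ?_
  have : ((univ \ {v0} : Finset (Fin n)).card : ℝ) = (n : ℝ) - 1 := by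
    rw [card_sdiff_of_subset (by simp)]
    simp
    rw [Nat.cast_sub hn]
    simp
  rw [this]
  linarith

lemma le_deltaN (t : ℝ) (ht0 : 0 < t) (ht1 : t ≤ 1) {k : ℕ} (hk : 1 ≤ k) :
    ((k : ℝ) - 1) + k * t ≤ deltaN 2 t (2*k) := by
  classical
  have hk1 : (1:ℝ) ≤ (k:ℝ) := by exact_mod_cast hk
  apply le_of_forall_sub_le
  intro ε hε
  set c : ℝ := t - min (ε / k) t with hc
  have hc0 : 0 ≤ c := by simp [hc]
  have hclt : c < t := by
    have : 0 < min (ε / k) t := lt_min (div_pos hε (by linarith)) ht0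
    rw [hc]; linarith
  have hc1 : c ≤ 1 := by linarith
  have hkc : ((k:ℝ) - 1) + k * t - ε ≤ ((k:ℝ) - 1) + k * c := by
    have h1 : k * (t - c) ≤ ε := by
      rw [hc]
      have : min (ε / k) t ≤ ε / k := min_le_left _ _
      calc (k:ℝ) * (t - (t - min (ε / k) t)) = k * min (ε / k) t := by ring
        _ ≤ k * (ε / k) := by nlinarith
        _ = ε := by field_simp
    nlinarith
  refine le_trans hkc ?_
  -- the construction
  set A : Finset (Fin (2*k)) := univ.filter (fun u => (u:ℕ) < k - 1) with hA
  have hAcard : A.card = k - 1 := card_filter_fin_lt (by omega)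
  set w : Fin (2*k) → Fin (2*k) → ℝ :=
    fun x y => if (x:ℕ) < k - 1 ∨ (y:ℕ) < k - 1 then 1 else c with hw
  have hsymm : ∀ x y, w x y = w y x := by
    intro x y; simp only [hw, or_comm]
  have hrange : ∀ x y : Fin (2*k), x ≠ y → w x y ∈ Set.Icc (0:ℝ) 1 := by
    intro x y _
    simp only [hw]
    split_ifs
    · exact ⟨zero_le_one, le_refl 1⟩
    · exact ⟨hc0, hc1⟩
  have hfact : ∀ P : Finset (Finset (Fin (2*k))), IsFactor 2 P →
      ∃ S ∈ P, cliqueWeight w S < t * ((2:ℕ).choose 2 : ℝ) := by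
    intro P hP
    obtain ⟨hP2, hPdisj, hPun⟩ := hP
    have hPcard : P.card = k := by
      have h1 : (P.biUnion id).card = ∑ S ∈ P, (id S).card := card_biUnion hPdisj
      have h2 : ∀ S ∈ P, (id S : Finset (Fin (2*k))).card = 2 := fun S hS => hP2 S hS
      rw [hPun, Finset.sum_congr rfl h2] at h1
      simp only [card_univ, Fintype.card_fin, Finset.sum_const, smul_eq_mul] at h1
      omega
    -- some part avoids A
    obtain ⟨S, hS, hSA⟩ : ∃ S ∈ P, S ∩ A = ∅ := by
      by_contra hcon
      push_neg at hcon
      have h1 : ∀ S ∈ P, 1 ≤ (S ∩ A).card := by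
        intro S hS
        exact card_pos.2 (hcon S hS)
      have h2 : A = P.biUnion (fun S => S ∩ A) := by
        ext z
        simp only [mem_biUnion, mem_inter]
        constructor
        · intro hz
          have : z ∈ P.biUnion id := by rw [hPun]; exact mem_univ z
          obtain ⟨S, hS, hzS⟩ := mem_biUnion.1 this
          exact ⟨S, hS, hzS, hz⟩
        · rintro ⟨S, -, -, hz⟩; exact hz
      have h3 : A.card = ∑ S ∈ P, (S ∩ A).card := by
        conv_lhs => rw [h2]
        exact card_biUnion (fun e he f hf hef =>
          (hPdisj e he f hf hef).mono inter_subset_left inter_subset_left)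
      have h4 : P.card ≤ A.card := by
        rw [h3]
        calc P.card = ∑ _S ∈ P, 1 := by simp
          _ ≤ ∑ S ∈ P, (S ∩ A).card := Finset.sum_le_sum h1
      omega
    obtain ⟨x, y, hxy, rfl⟩ := Finset.card_eq_two.1 (hP2 S hS)
    refine ⟨{x,y}, hS, ?_⟩
    have hx : ¬ ((x:ℕ) < k - 1) := by
      intro h
      have : x ∈ ({x,y} : Finset (Fin (2*k))) ∩ A := by
        rw [mem_inter, hA]
        exact ⟨by simp, mem_filter.2 ⟨mem_univ _, h⟩⟩
      rw [hSA] at this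
      exact absurd this (notMem_empty x)
    have hy : ¬ ((y:ℕ) < k - 1) := by
      intro h
      have : y ∈ ({x,y} : Finset (Fin (2*k))) ∩ A := by
        rw [mem_inter, hA]
        exact ⟨by simp, mem_filter.2 ⟨mem_univ _, h⟩⟩
      rw [hSA] at this
      exact absurd this (notMem_empty y)
    rw [cliqueWeight_pair w hsymm hxy]
    have : w x y = c := by simp [hw, hx, hy]
    rw [this]
    have hch : (((2:ℕ).choose 2 : ℕ) : ℝ) = 1 := by norm_num
    rw [hch, mul_one]
    exact hclt
  have hwdeg : ∀ v, ((k:ℝ) - 1) + k * c ≤ wdeg w v := by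
    intro v
    by_cases hv : (v:ℕ) < k - 1
    · have : wdeg w v = ((2*k - 1 : ℕ) : ℝ) := by
        rw [wdeg]
        rw [Finset.sum_congr rfl (fun (u : Fin (2*k)) (_ : u ∈ univ \ {v}) =>
          show w v u = 1 by simp [hw, hv])]
        rw [Finset.sum_const, card_sdiff_of_subset (by simp)]
        simp
      rw [this]
      have : ((2*k - 1 : ℕ) : ℝ) = 2*(k:ℝ) - 1 := by
        push_cast [Nat.cast_sub (by omega : 1 ≤ 2*k)]
        ring
      rw [this]
      nlinarith
    · have hAmem : ∀ u : Fin (2*k), u ∈ A ↔ (u:ℕ) < k - 1 := by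
        intro u; rw [hA]; simp
      have hsplit : wdeg w v = (∑ u ∈ (univ \ {v}).filter (fun u : Fin (2*k) => (u:ℕ) < k - 1), w v u)
          + ∑ u ∈ (univ \ {v}).filter (fun u : Fin (2*k) => ¬ (u:ℕ) < k - 1), w v u :=
        (Finset.sum_filter_add_sum_filter_not _ _ _).symm
      have hfA : (univ \ {v}).filter (fun u : Fin (2*k) => (u:ℕ) < k - 1) = A := by
        ext u
        rw [hAmem u]
        simp only [mem_filter, mem_sdiff, mem_univ, true_and, mem_singleton]
        constructor
        · rintro ⟨-, h⟩; exact h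
        · intro h
          exact ⟨fun he => hv (by rw [← he]; exact h), h⟩
      have h1 : (∑ u ∈ (univ \ {v}).filter (fun u : Fin (2*k) => (u:ℕ) < k - 1), w v u)
          = ((k:ℝ) - 1) := by
        rw [hfA, Finset.sum_congr rfl (fun (u : Fin (2*k)) (hu : u ∈ A) =>
          show w v u = 1 by simp [hw, (hAmem u).1 hu])]
        rw [Finset.sum_const, hAcard]
        simp [Nat.cast_sub hk]
      have hcard2 : ((univ \ {v}).filter (fun u : Fin (2*k) => ¬ (u:ℕ) < k - 1)).card = k := by
        rw [Finset.filter_not, card_sdiff_of_subset (filter_subset _ _)]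
        have h5 : ((univ \ {v} : Finset (Fin (2*k)))).card = 2*k - 1 := by
          rw [card_sdiff_of_subset (by simp)]; simp
        rw [h5, hfA, hAcard]
        omega
      have h2 : (∑ u ∈ (univ \ {v}).filter (fun u : Fin (2*k) => ¬ (u:ℕ) < k - 1), w v u)
          = (k:ℝ) * c := by
        rw [Finset.sum_congr rfl (fun (u : Fin (2*k))
          (hu : u ∈ (univ \ {v}).filter (fun u : Fin (2*k) => ¬ (u:ℕ) < k - 1)) =>
          show w v u = c by simp [hw, hv, (mem_filter.1 hu).2])]
        rw [Finset.sum_const, hcard2]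
        simp [mul_comm]
      rw [hsplit, h1, h2]
  -- conclude
  have hmem : ((k:ℝ) - 1) + k * c ≤ sInf (Set.range (wdeg w)) := by
    apply le_csInf ⟨wdeg w ⟨0, by omega⟩, Set.mem_range_self _⟩
    rintro _ ⟨v, rfl⟩
    exact hwdeg v
  have hin : sInf (Set.range (wdeg w)) ∈ { d : ℝ | ∃ w : Fin (2*k) → Fin (2*k) → ℝ,
      (∀ x y, w x y = w y x) ∧
      (∀ x y, x ≠ y → w x y ∈ Set.Icc (0 : ℝ) 1) ∧
      (∀ P : Finset (Finset (Fin (2*k))), IsFactor 2 P →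
        ∃ S ∈ P, cliqueWeight w S < t * ((2:ℕ).choose 2 : ℝ)) ∧
      d = sInf (Set.range (wdeg w)) } := ⟨w, hsymm, hrange, hfact, rfl⟩
  have hbdd : BddAbove { d : ℝ | ∃ w : Fin (2*k) → Fin (2*k) → ℝ,
      (∀ x y, w x y = w y x) ∧
      (∀ x y, x ≠ y → w x y ∈ Set.Icc (0 : ℝ) 1) ∧
      (∀ P : Finset (Finset (Fin (2*k))), IsFactor 2 P →
        ∃ S ∈ P, cliqueWeight w S < t * ((2:ℕ).choose 2 : ℝ)) ∧
      d = sInf (Set.range (wdeg w)) } :=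
    ⟨(2*k : ℕ), deltaN_bddAbove t (by omega)⟩
  refine le_trans hmem (le_csSup hbdd hin)

/-- `δ(2,t) = (1+t)/2`. -/
theorem delta_two (t : ℝ) (ht : t ∈ Set.Ioc (0 : ℝ) 1) :
    delta 2 t = (1 + t) / 2 := by
  obtain ⟨ht0, ht1⟩ := ht
  have key : ∀ k : ℕ, 1 ≤ k → deltaN 2 t (2*k) = ((k:ℝ)-1) + k*t :=
    fun k hk => le_antisymm (deltaN_le t ht0 ht1 hk) (le_deltaN t ht0 ht1 hk)
  rw [delta]
  have heq : (fun k : ℕ => deltaN 2 t (2 * k) / ((2 * k : ℕ) : ℝ)) =ᶠ[Filter.atTop]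
      (fun k : ℕ => (1 + t)/2 - (1/2) * (1/(k:ℝ))) := by
    filter_upwards [Filter.eventually_ge_atTop 1] with k hk
    rw [key k hk]
    have hkpos : (0:ℝ) < (k:ℝ) := by exact_mod_cast hk
    have hkne : (k:ℝ) ≠ 0 := ne_of_gt hkpos
    push_cast
    field_simp
    ring
  rw [Filter.limsup_congr heq]
  have htend : Filter.Tendsto (fun k : ℕ => (1 + t)/2 - (1/2) * (1/(k:ℝ))) Filter.atTop
      (nhds ((1+t)/2)) := by
    have h0 : Filter.Tendsto (fun k : ℕ => (1/(k:ℝ))) Filter.atTop (nhds 0) :=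
      tendsto_one_div_atTop_nhds_zero_nat
    have := (h0.const_mul (1/2 : ℝ)).const_sub ((1+t)/2)
    simpa using this
  exact htend.limsup_eq
end

section
/- For every integer r ≥ 2 and real t ∈ (0,1]: δ(r,t) ≥ 1/r + (1 - 1/r)·t, where δ(r,t) = limsup_{n→∞} δ(r,t,n)/n and δ(r,t,n) is the supremum over edge weightings w of K_n with the property that every K_r-factor has a part of weight strictly less than t·C(r,2), of the minimum weighted degree δ_w(K_n). -/
open Finset

lemma mem_deltaN_le {r : ℕ} {t : ℝ} {n : ℕ} {d : ℝ}
    (hd : d ∈ { d : ℝ | ∃ w : Fin n → Fin n → ℝ,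
      (∀ x y, w x y = w y x) ∧
      (∀ x y, x ≠ y → w x y ∈ Set.Icc (0 : ℝ) 1) ∧
      (∀ P : Finset (Finset (Fin n)), IsFactor r P →
        ∃ S ∈ P, cliqueWeight w S < t * (r.choose 2 : ℝ)) ∧
      d = sInf (Set.range (wdeg w)) }) : d ≤ (n : ℝ) := by
  obtain ⟨w, hsym, hIcc, hfac, rfl⟩ := hd
  rcases Nat.eq_zero_or_pos n with hn | hn
  · subst hn
    have : Set.range (wdeg w) = ∅ := Set.range_eq_empty _
    rw [this, Real.sInf_empty]
    simp
  · have hb : BddBelow (Set.range (wdeg w)) := by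
      refine ⟨0, ?_⟩
      rintro x ⟨v, rfl⟩
      refine Finset.sum_nonneg fun u hu => ?_
      have huv : v ≠ u := by
        simp only [Finset.mem_sdiff, Finset.mem_singleton] at hu
        exact fun h => hu.2 h.symm
      exact (hIcc v u huv).1
    have hv : wdeg w ⟨0, hn⟩ ≤ (n : ℝ) := by
      have : wdeg w ⟨0, hn⟩ ≤ ∑ u ∈ univ \ {(⟨0, hn⟩ : Fin n)}, (1 : ℝ) := by
        refine Finset.sum_le_sum fun u hu => ?_
        have huv : (⟨0, hn⟩ : Fin n) ≠ u := by
          simp only [Finset.mem_sdiff, Finset.mem_singleton] at hu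
          exact fun h => hu.2 h.symm
        exact (hIcc _ u huv).2
      rw [Finset.sum_const, nsmul_eq_mul, mul_one] at this
      calc wdeg w ⟨0, hn⟩ ≤ ((univ \ {(⟨0, hn⟩ : Fin n)}).card : ℝ) := this
        _ ≤ ((univ : Finset (Fin n)).card : ℝ) := by
            exact_mod_cast Finset.card_le_card (Finset.sdiff_subset)
        _ = (n : ℝ) := by simp
    exact le_trans (csInf_le hb (Set.mem_range_self _)) hv

lemma deltaN_le_s13 (r : ℕ) (t : ℝ) (n : ℕ) : deltaN r t n ≤ (n : ℝ) := by
  apply Real.sSup_le (fun d hd => mem_deltaN_le hd) (Nat.cast_nonneg n)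
lemma factor_card {n r k : ℕ} (hr : 0 < r) (hn : n = r * k)
    (P : Finset (Finset (Fin n))) (hP : IsFactor r P) : P.card = k := by
  obtain ⟨hc, hd, hu⟩ := hP
  have h1 : (P.biUnion id).card = ∑ S ∈ P, S.card := Finset.card_biUnion hd
  have h2 : (P.biUnion id).card = n := by rw [hu]; simp
  have h3 : ∑ S ∈ P, S.card = P.card * r := by
    rw [Finset.sum_congr rfl hc]; simp [mul_comm]
  have : P.card * r = k * r := by rw [← h3, ← h1, h2, hn, mul_comm]
  exact Nat.eq_of_mul_eq_mul_right hr this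

lemma exists_avoid {n r k : ℕ} (hr : 0 < r) (hn : n = r * k)
    (B : Finset (Fin n)) (hB : B.card < k)
    (P : Finset (Finset (Fin n))) (hP : IsFactor r P) :
    ∃ S ∈ P, ∀ x ∈ S, x ∉ B := by
  by_contra h
  push_neg at h
  have hPk := factor_card hr hn P hP
  obtain ⟨hc, hd, hu⟩ := hP
  have hdisj : ∀ S ∈ P, ∀ T ∈ P, S ≠ T → Disjoint (S ∩ B) (T ∩ B) := fun S hS T hT hST =>
    (hd S hS T hT hST).mono inter_subset_left inter_subset_left
  have h1 : (P.biUnion fun S => S ∩ B).card = ∑ S ∈ P, (S ∩ B).card :=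
    Finset.card_biUnion hdisj
  have h2 : (P.biUnion fun S => S ∩ B) ⊆ B := by
    intro x hx; simp only [Finset.mem_biUnion] at hx
    obtain ⟨S, _, hx⟩ := hx; exact (Finset.mem_inter.1 hx).2
  have h3 : P.card ≤ ∑ S ∈ P, (S ∩ B).card := by
    rw [Finset.card_eq_sum_ones]
    refine Finset.sum_le_sum fun S hS => ?_
    obtain ⟨x, hxS, hxB⟩ := h S hS
    exact Finset.card_pos.2 ⟨x, Finset.mem_inter.2 ⟨hxS, hxB⟩⟩
  have h4 := Finset.card_le_card h2
  omega
lemma construction {r k : ℕ} (hr : 2 ≤ r) (hk : 1 ≤ k) {t t' : ℝ}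
    (ht'0 : 0 ≤ t') (ht' : t' < t) (ht1 : t ≤ 1) :
    ∃ w : Fin (r * k) → Fin (r * k) → ℝ,
      (∀ x y, w x y = w y x) ∧
      (∀ x y, x ≠ y → w x y ∈ Set.Icc (0 : ℝ) 1) ∧
      (∀ P : Finset (Finset (Fin (r * k))), IsFactor r P →
        ∃ S ∈ P, cliqueWeight w S < t * (r.choose 2 : ℝ)) ∧
      (k : ℝ) - 2 + ((r : ℝ) * k - k) * t' ≤ sInf (Set.range (wdeg w)) := by
  have ht'1 : t' ≤ 1 := le_trans (le_of_lt ht') ht1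
  have h2k : 2 * k ≤ r * k := Nat.mul_le_mul_right k hr
  have hlt : k - 1 < r * k := by omega
  set n := r * k with hn
  set b : Fin n := ⟨k - 1, hlt⟩ with hb
  refine ⟨fun x y => if x < b ∨ y < b then 1 else t', ?_, ?_, ?_, ?_⟩
  · intro x y
    dsimp only
    exact if_congr or_comm rfl rfl
  · intro x y _
    dsimp only
    split_ifs
    · exact ⟨zero_le_one, le_refl 1⟩
    · exact ⟨ht'0, ht'1⟩
  · intro P hP
    have hBcard : (Finset.Iio b).card < k := by
      rw [Fin.card_Iio]; simp only [hb]; omega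
    obtain ⟨S, hS, hav⟩ := exists_avoid (by omega) hn (Finset.Iio b) hBcard P hP
    refine ⟨S, hS, ?_⟩
    have hScard : S.card = r := hP.1 S hS
    have hnb : ∀ x ∈ S, ¬ x < b := fun x hx => by
      have := hav x hx; simpa [Finset.mem_Iio] using this
    have hrow : ∀ x ∈ S, (∑ y ∈ S, if x ≠ y then
        (if x < b ∨ y < b then (1:ℝ) else t') else 0) = ((r : ℝ) - 1) * t' := by
      intro x hx
      have : ∀ y ∈ S, (if x ≠ y then (if x < b ∨ y < b then (1:ℝ) else t') else 0)
          = (if x ≠ y then t' else 0) := by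
        intro y hy
        by_cases h : x = y
        · simp [h]
        · simp only [if_pos h, if_neg (not_or.2 ⟨hnb x hx, hnb y hy⟩)]
      rw [Finset.sum_congr rfl this, ← Finset.sum_filter, Finset.filter_ne, Finset.sum_const,
        Finset.card_erase_of_mem hx, hScard]
      have : ((r - 1 : ℕ) : ℝ) = (r : ℝ) - 1 := by
        have : 1 ≤ r := by omega
        push_cast [this]; ring
      rw [nsmul_eq_mul, this]
    have hcw : cliqueWeight (fun x y => if x < b ∨ y < b then (1:ℝ) else t') S
        = (r : ℝ) * (((r : ℝ) - 1) * t') / 2 := by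
      unfold cliqueWeight
      rw [Finset.sum_congr rfl hrow, Finset.sum_const, hScard, nsmul_eq_mul]
    rw [hcw, Nat.cast_choose_two]
    have hrR : (2 : ℝ) ≤ (r : ℝ) := by exact_mod_cast hr
    nlinarith [mul_pos (by linarith : (0:ℝ) < (r:ℝ)) (by linarith : (0:ℝ) < (r:ℝ) - 1)]
  · have hn0 : 0 < n := by omega
    apply le_csInf ⟨wdeg (fun x y => if x < b ∨ y < b then (1:ℝ) else t') ⟨0, hn0⟩,
      Set.mem_range_self _⟩
    rintro d ⟨v, rfl⟩
    set g : Fin n → ℝ := fun u => if u < b then 1 else t' with hg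
    have hterm : ∀ u ∈ univ \ {v}, g u ≤ (if v < b ∨ u < b then (1:ℝ) else t') := by
      intro u _
      by_cases hub : u < b
      · simp [hg, hub]
      · simp only [hg, if_neg hub]
        split_ifs
        · exact ht'1
        · exact le_refl _
    have h1 : ∑ u ∈ univ \ {v}, g u ≤ wdeg (fun x y => if x < b ∨ y < b then (1:ℝ) else t') v :=
      Finset.sum_le_sum hterm
    have h2 : ∑ u ∈ univ \ {v}, g u = (∑ u, g u) - g v := by
      rw [Finset.sum_sdiff_eq_sub (Finset.subset_univ {v}), Finset.sum_singleton]
    have h3 : ∑ u, g u = ((k : ℝ) - 1) + ((n : ℝ) - (k - 1)) * t' := by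
      rw [hg, Finset.sum_ite, Finset.sum_const, Finset.sum_const, nsmul_eq_mul, nsmul_eq_mul]
      have hfil : univ.filter (fun u : Fin n => u < b) = Finset.Iio b := by
        ext u; simp [Finset.mem_Iio]
      have hc1 : (univ.filter (fun u : Fin n => u < b)).card = k - 1 := by
        rw [hfil, Fin.card_Iio]
      have hc2 : (univ.filter (fun u : Fin n => ¬ u < b)).card = n - (k - 1) := by
        have := Finset.card_filter_add_card_filter_not (s := (univ : Finset (Fin n)))
          (p := fun u : Fin n => u < b)
        simp only [Finset.card_univ, Fintype.card_fin] at this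
        omega
      rw [hc1, hc2]
      have e1 : ((k - 1 : ℕ) : ℝ) = (k : ℝ) - 1 := by push_cast [hk]; ring
      have e2 : ((n - (k - 1) : ℕ) : ℝ) = (n : ℝ) - ((k : ℝ) - 1) := by
        have h1 : k - 1 ≤ n := by omega
        push_cast [h1, hk]; ring
      rw [e1, e2]; ring
    have hgv : g v ≤ 1 := by
      show (if v < b then (1:ℝ) else t') ≤ 1
      split_ifs
      · exact le_refl _
      · exact ht'1
    have hnk : (k : ℝ) ≤ (n : ℝ) := by exact_mod_cast (by omega : k ≤ n)
    have hnr : (n : ℝ) = (r : ℝ) * k := by rw [hn]; push_cast; ring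
    rw [h2, h3, hnr] at h1
    have hex : ((r : ℝ) * k - ((k : ℝ) - 1)) * t' = ((r : ℝ) * k - k) * t' + t' := by ring
    rw [hex] at h1
    linarith

/-- lower bound: `δ(r,t) ≥ 1/r + (1 - 1/r)·t` for all `r ≥ 2`, `t ∈ (0,1]`. -/
theorem delta_lower_bound (r : ℕ) (hr : 2 ≤ r) (t : ℝ) (ht : t ∈ Set.Ioc (0 : ℝ) 1) :
    1 / (r : ℝ) + (1 - 1 / (r : ℝ)) * t ≤ delta r t := by
  obtain ⟨ht0, ht1⟩ := ht
  set c : ℝ := 1 / (r : ℝ) + (1 - 1 / (r : ℝ)) * t with hc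
  set u : ℕ → ℝ := fun k => deltaN r t (r * k) / ((r * k : ℕ) : ℝ) with hu
  have hr0 : (r : ℝ) ≠ 0 := by positivity
  have hbdd : Filter.IsBoundedUnder (· ≤ ·) Filter.atTop u := by
    refine Filter.isBoundedUnder_of ⟨1, fun k => ?_⟩
    rcases Nat.eq_zero_or_pos (r * k) with h0 | h0
    · simp only [hu]; rw [h0]; norm_num
    · have hn0 : (0 : ℝ) < ((r * k : ℕ) : ℝ) := by exact_mod_cast h0
      exact div_le_one_of_le₀ (by simpa using deltaN_le_s13 r t (r * k)) hn0.le
  have key : ∀ ε : ℝ, 0 < ε → c - ε ≤ delta r t := by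
    intro ε hε
    obtain ⟨K0, hK0⟩ := exists_nat_ge (4 / ε)
    have hev : ∀ᶠ k in Filter.atTop, c - ε ≤ u k := by
      rw [Filter.eventually_atTop]
      refine ⟨max K0 1, fun k hk => ?_⟩
      have hk1 : 1 ≤ k := le_trans (le_max_right _ _) hk
      have hkK : K0 ≤ k := le_trans (le_max_left _ _) hk
      set ε' : ℝ := min (ε / 2) t with hε'
      have hε'0 : 0 < ε' := lt_min (by linarith) ht0
      have hε'2 : ε' ≤ ε / 2 := min_le_left _ _
      have hε't : ε' ≤ t := min_le_right _ _
      obtain ⟨w, hsym, hIcc, hfac, hbound⟩ :=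
        construction hr hk1 (t' := t - ε') (by linarith) (by linarith) ht1
      have hd_mem : sInf (Set.range (wdeg w)) ∈ { d : ℝ | ∃ w : Fin (r*k) → Fin (r*k) → ℝ,
          (∀ x y, w x y = w y x) ∧
          (∀ x y, x ≠ y → w x y ∈ Set.Icc (0 : ℝ) 1) ∧
          (∀ P : Finset (Finset (Fin (r*k))), IsFactor r P →
            ∃ S ∈ P, cliqueWeight w S < t * (r.choose 2 : ℝ)) ∧
          d = sInf (Set.range (wdeg w)) } := ⟨w, hsym, hIcc, hfac, rfl⟩
      have hdle : sInf (Set.range (wdeg w)) ≤ deltaN r t (r * k) := by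
        refine le_csSup ⟨((r * k : ℕ) : ℝ), fun x hx => mem_deltaN_le hx⟩ hd_mem
      have hn0 : (0 : ℝ) < ((r * k : ℕ) : ℝ) := by
        have : 0 < r * k := by positivity
        exact_mod_cast this
      have hnr : ((r * k : ℕ) : ℝ) = (r : ℝ) * (k : ℝ) := by push_cast; ring
      have h2k : 2 * (k : ℝ) ≤ (r : ℝ) * k := by
        have : (2 : ℝ) ≤ (r : ℝ) := by exact_mod_cast hr
        nlinarith [Nat.cast_nonneg (α := ℝ) k]
      have hkK' : (K0 : ℝ) ≤ (k : ℝ) := by exact_mod_cast hkK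
      have hcn : c * ((r : ℝ) * k) = (k : ℝ) + ((r : ℝ) * k - k) * t := by
        rw [hc]; field_simp
      have hmain : (c - ε) * ((r * k : ℕ) : ℝ) ≤ sInf (Set.range (wdeg w)) := by
        rw [hnr]
        have h8 : 8 / ε ≤ (r : ℝ) * k := by
          calc 8 / ε = 2 * (4 / ε) := by ring
            _ ≤ 2 * (K0 : ℝ) := by linarith
            _ ≤ 2 * (k : ℝ) := by linarith
            _ ≤ (r : ℝ) * k := h2k
        have h8' : 8 ≤ ε * ((r : ℝ) * k) := by
          rw [div_le_iff₀ hε] at h8; linarith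
        have hrk0 : (0 : ℝ) ≤ (r : ℝ) * k := by positivity
        have hεrk : ((r : ℝ) * k - k) * ε' ≤ ((r : ℝ) * k) * (ε / 2) := by
          have h1 : ((r : ℝ) * k - k) * ε' ≤ ((r : ℝ) * k) * ε' := by
            have : (0 : ℝ) ≤ (k : ℝ) := Nat.cast_nonneg k
            nlinarith
          have h2 : ((r : ℝ) * k) * ε' ≤ ((r : ℝ) * k) * (ε / 2) :=
            mul_le_mul_of_nonneg_left hε'2 hrk0
          linarith
        have : (c - ε) * ((r : ℝ) * k) ≤ (k : ℝ) - 2 + ((r : ℝ) * k - k) * (t - ε') := by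
          have hexp : (c - ε) * ((r : ℝ) * k) = c * ((r : ℝ) * k) - ε * ((r : ℝ) * k) := by ring
          rw [hexp, hcn]
          nlinarith
        linarith [hbound]
      have : c - ε ≤ deltaN r t (r * k) / ((r * k : ℕ) : ℝ) := by
        rw [le_div_iff₀ hn0]
        exact le_trans hmain hdle
      exact this
    have := Filter.le_limsup_of_frequently_le hev.frequently hbdd
    exact this
  have : ∀ ε : ℝ, 0 < ε → c ≤ delta r t + ε := fun ε hε => by linarith [key ε hε]
  exact le_of_forall_pos_le_add this
end
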